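/- arXiv:1601.04859 — 2 statements merged into one kernel-verified Lean document; each statement's English description precedes it below -/
import Mathlib

section
/- Let α, β be positive integers and let C be a Z2[u]Z2[u,v]-additive code in R1^α × R2^β. Then C is a (1+u,1+uv)-additive constacyclic code (τ(C) = C) if and only if its Gray image Φ(C) ⊆ Z2^{2α+8β} is invariant under the block-shift permutation σ (i.e., σ(Φ(C)) = Φ(C)). -/
open TrivSqZeroExt Finset

set_option synthInstance.maxHeartbeats 1000000
set_option maxHeartbeats 2000000

noncomputable section

/-- `Z2` is the field with two elements. -/
abbrev Z2 := ZMod 2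

/-- `R1 = Z2[u] = Z2 + uZ2` with `u² = 0`. -/
abbrev R1 := DualNumber Z2

/-- `R2 = Z2[u,v] = Z2 + uZ2 + vZ2 + uvZ2` with `u² = v² = 0`, `uv = vu`,
realized as dual numbers over `R1`. -/
abbrev R2 := DualNumber R1

/-- The element `u` of `R1`. -/
def u1 : R1 := DualNumber.eps

/-- The inclusion of `Z2` into `R1`. -/
def ofZ2R1 (a : Z2) : R1 := TrivSqZeroExt.inl a

/-- The element `u` of `R2`. -/
def uu : R2 := TrivSqZeroExt.inl DualNumber.eps

/-- The element `v` of `R2`. -/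
def vv : R2 := DualNumber.eps

/-- The inclusion of `Z2` into `R2`. -/
def ofZ2R2 (a : Z2) : R2 := TrivSqZeroExt.inl (TrivSqZeroExt.inl a)

/-- `η : R2 → R1`, `a + ub + vc + uvd ↦ a + ub` (reduction modulo `v`),
as a ring homomorphism. -/
def eta : R2 →+* R1 where
  toFun := TrivSqZeroExt.fst
  map_one' := rfl
  map_mul' := TrivSqZeroExt.fst_mul
  map_zero' := rfl
  map_add' := TrivSqZeroExt.fst_add

/-- The ambient space `R1^α × R2^β`. -/
abbrev V (α β : ℕ) := (Fin α → R1) × (Fin β → R2)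

/-- The scalar multiplication of `R2` on `R1^α × R2^β`:
`l • (a₀,…,a_{α-1},b₀,…,b_{β-1}) = (η(l)a₀,…,η(l)a_{α-1}, lb₀,…,lb_{β-1})`. -/
instance instSMulV (α β : ℕ) : SMul R2 (V α β) :=
  ⟨fun l w => (fun i => eta l * w.1 i, fun j => l * w.2 j)⟩

lemma smulV_def {α β : ℕ} (l : R2) (w : V α β) :
    l • w = (fun i => eta l * w.1 i, fun j => l * w.2 j) := rfl

instance instMulActionV (α β : ℕ) : MulAction R2 (V α β) where
  one_smul w := by
    refine Prod.ext (funext fun i => ?_) (funext fun j => ?_)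
    · show eta 1 * w.1 i = w.1 i; simp
    · show (1 : R2) * w.2 j = w.2 j; simp
  mul_smul l l' w := by
    refine Prod.ext (funext fun i => ?_) (funext fun j => ?_)
    · show eta (l * l') * w.1 i = eta l * (eta l' * w.1 i); rw [map_mul, mul_assoc]
    · show l * l' * w.2 j = l * (l' * w.2 j); rw [mul_assoc]

instance instDistribMulActionV (α β : ℕ) : DistribMulAction R2 (V α β) where
  smul_zero l := by
    refine Prod.ext (funext fun i => ?_) (funext fun j => ?_)
    · show eta l * (0 : R1) = 0; simp
    · show l * (0 : R2) = 0; simp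
  smul_add l w w' := by
    refine Prod.ext (funext fun i => ?_) (funext fun j => ?_)
    · show eta l * (w.1 i + w'.1 i) = eta l * w.1 i + eta l * w'.1 i; rw [mul_add]
    · show l * (w.2 j + w'.2 j) = l * w.2 j + l * w'.2 j; rw [mul_add]

/-- `R1^α × R2^β` is an `R2`-module; a `Z2[u]Z2[u,v]`-additive code is an
`R2`-submodule of this module. -/
instance instModuleV (α β : ℕ) : Module R2 (V α β) where
  add_smul l l' w := by
    refine Prod.ext (funext fun i => ?_) (funext fun j => ?_)
    · show eta (l + l') * w.1 i = eta l * w.1 i + eta l' * w.1 i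
      rw [map_add, add_mul]
    · show (l + l') * w.2 j = l * w.2 j + l' * w.2 j; rw [add_mul]
  zero_smul w := by
    refine Prod.ext (funext fun i => ?_) (funext fun j => ?_)
    · show eta 0 * w.1 i = 0; simp
    · show (0 : R2) * w.2 j = 0; simp

/-- The cyclic shift `S` on `R1^α × R2^β`. -/
def shiftS {α β : ℕ} [NeZero α] [NeZero β] (w : V α β) : V α β :=
  (fun i => w.1 (i - 1), fun j => w.2 (j - 1))

/-- The `(1+u, 1+uv)`-constacyclic shift `τ` on `R1^α × R2^β`. -/
def tau {α β : ℕ} [NeZero α] [NeZero β] (w : V α β) : V α β :=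
  (fun i => (if i = 0 then 1 + u1 else 1) * w.1 (i - 1),
   fun j => (if j = 0 then 1 + uu * vv else 1) * w.2 (j - 1))

/-- The inner product on `R1^α × R2^β`:
`⟨x,y⟩ = uv·ι(Σᵢ xᵢyᵢ) + Σⱼ x_{α+j} y_{α+j}` where `ι : R1 → R2` is the
natural inclusion. -/
def innerP {α β : ℕ} (x y : V α β) : R2 :=
  uu * vv * TrivSqZeroExt.inl (∑ i, x.1 i * y.1 i) + ∑ j, x.2 j * y.2 j

/-- The additive dual of a code `C ⊆ R1^α × R2^β`. -/
def dualSet {α β : ℕ} (C : Set (V α β)) : Set (V α β) :=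
  {y | ∀ x ∈ C, innerP x y = 0}

instance doubleNeZero (α : ℕ) [NeZero α] : NeZero (α + α) :=
  ⟨by have := NeZero.ne α; omega⟩

/-- The image space of the Gray map: `Z2^{2α+8β}`, grouped as a block of
`2α` coordinates followed by four blocks of `2β` coordinates. -/
abbrev W (α β : ℕ) :=
  (Fin (α + α) → Z2) × (Fin (β + β) → Z2) × (Fin (β + β) → Z2) ×
    (Fin (β + β) → Z2) × (Fin (β + β) → Z2)

/-- Cyclic shift by one position of a tuple. -/
def cyc {n : ℕ} [NeZero n] {A : Type*} (f : Fin n → A) : Fin n → A :=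
  fun i => f (i - 1)

/-- The block-shift permutation `σ` of `Z2^{2α+8β}`: the block of `2α`
coordinates and each of the four blocks of `2β` coordinates are cyclically
shifted by one position. -/
def sigmaW {α β : ℕ} [NeZero α] [NeZero β] (w : W α β) : W α β :=
  (cyc w.1, cyc w.2.1, cyc w.2.2.1, cyc w.2.2.2.1, cyc w.2.2.2.2)

/-- The Gray map `Φ : R1^α × R2^β → Z2^{2α+8β}`. -/
def Phi {α β : ℕ} (w : V α β) : W α β :=
  let r : Fin α → Z2 := fun i => (w.1 i).fst
  let q : Fin α → Z2 := fun i => (w.1 i).snd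
  let a : Fin β → Z2 := fun j => (w.2 j).fst.fst
  let b : Fin β → Z2 := fun j => (w.2 j).fst.snd
  let c : Fin β → Z2 := fun j => (w.2 j).snd.fst
  let d : Fin β → Z2 := fun j => (w.2 j).snd.snd
  (Fin.append q (fun i => q i + r i),
   Fin.append d (fun j => a j + d j),
   Fin.append (fun j => b j + d j) (fun j => a j + b j + d j),
   Fin.append (fun j => c j + d j) (fun j => a j + c j + d j),
   Fin.append (fun j => b j + c j + d j) (fun j => a j + b j + c j + d j))

/-- Lee weight on `R1`: `w_L(r + uq) = w_H(q, q + r)`. -/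
def leeR1 (x : R1) : ℕ :=
  (if x.snd ≠ 0 then 1 else 0) + (if x.snd + x.fst ≠ 0 then 1 else 0)

/-- Lee weight on `R2`:
`w_L(a+ub+vc+uvd) = w_H(d, a+d, b+d, a+b+d, c+d, a+c+d, b+c+d, a+b+c+d)`. -/
def leeR2 (y : R2) : ℕ :=
  let a := y.fst.fst; let b := y.fst.snd; let c := y.snd.fst; let d := y.snd.snd
  (if d ≠ 0 then 1 else 0) + (if a + d ≠ 0 then 1 else 0) +
  (if b + d ≠ 0 then 1 else 0) + (if a + b + d ≠ 0 then 1 else 0) +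
  (if c + d ≠ 0 then 1 else 0) + (if a + c + d ≠ 0 then 1 else 0) +
  (if b + c + d ≠ 0 then 1 else 0) + (if a + b + c + d ≠ 0 then 1 else 0)

/-- Lee weight on `R1^α × R2^β`: the sum of the Lee weights of the
coordinates. -/
def leeWt {α β : ℕ} (w : V α β) : ℕ :=
  ∑ i, leeR1 (w.1 i) + ∑ j, leeR2 (w.2 j)

/-- Hamming weight on `Z2^{2α+8β}`. -/
def wtW {α β : ℕ} (w : W α β) : ℕ :=
  hammingNorm w.1 + hammingNorm w.2.1 + hammingNorm w.2.2.1 +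
    hammingNorm w.2.2.2.1 + hammingNorm w.2.2.2.2

/-- Hamming distance on `Z2^{2α+8β}`. -/
def distW {α β : ℕ} (w w' : W α β) : ℕ :=
  hammingDist w.1 w'.1 + hammingDist w.2.1 w'.2.1 + hammingDist w.2.2.1 w'.2.2.1 +
    hammingDist w.2.2.2.1 w'.2.2.2.1 + hammingDist w.2.2.2.2 w'.2.2.2.2

/-! The Gray map intertwines the two shifts, `Φ ∘ τ = σ ∘ Φ`, and it is injective, so
`σ(Φ(C)) = Φ(τ(C))` equals `Φ(C)` exactly when `τ(C) = C`. Every block of `Φ` is a concatenation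
`(f(x_i))_i ++ (g(x_i))_i`, and multiplying a coordinate by the unit `1 + u` (resp. `1 + uv`)
adds `r` (resp. `a`) to the entry that `f` picks, so it swaps the roles of `f` and `g` (using
`2 = 0`). This swap is what a cyclic shift of the concatenation does at each of its two seams,
which is where `τ` applies the unit. -/

namespace Fin

variable {n : ℕ} [NeZero n]

lemma val_sub_one_eq_ite (i : Fin n) : ((i - 1 : Fin n) : ℕ) = if i = 0 then n - 1 else i - 1 := by
  obtain ⟨m, rfl⟩ := Nat.exists_eq_succ_of_ne_zero (NeZero.ne n)
  simpa using coe_sub_one i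

lemma castAdd_sub_one (i : Fin n) :
    castAdd n i - 1 = if i = 0 then natAdd n (i - 1) else castAdd n (i - 1) := by
  apply Fin.ext
  rw [apply_ite Fin.val]
  simp only [val_sub_one_eq_ite, val_castAdd, val_natAdd, Fin.ext_iff, val_zero]
  split_ifs <;> omega

lemma natAdd_sub_one (j : Fin n) :
    natAdd n j - 1 = if j = 0 then castAdd n (j - 1) else natAdd n (j - 1) := by
  apply Fin.ext
  rw [apply_ite Fin.val]
  simp only [val_sub_one_eq_ite, val_castAdd, val_natAdd, Fin.ext_iff, val_zero]
  split_ifs <;> omega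

end Fin

lemma cyc_append {n : ℕ} [NeZero n] {A : Type*} (f g : Fin n → A) :
    cyc (Fin.append f g) = Fin.append (fun i => if i = 0 then g (i - 1) else f (i - 1))
      (fun j => if j = 0 then f (j - 1) else g (j - 1)) := by
  funext k
  refine Fin.addCases (fun i => ?_) (fun j => ?_) k
  · rw [cyc, Fin.castAdd_sub_one, Fin.append_left]
    split_ifs <;> simp only [Fin.append_left, Fin.append_right]
  · rw [cyc, Fin.natAdd_sub_one, Fin.append_right]
    split_ifs <;> simp only [Fin.append_left, Fin.append_right]

lemma cyc_append_comp {n : ℕ} [NeZero n] {X A : Type*} (f g : X → A) (t : X → X)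
    (hf : ∀ a, f (t a) = g a) (hg : ∀ a, g (t a) = f a) (x y : Fin n → X)
    (hy : ∀ i, y i = if i = 0 then t (x (i - 1)) else x (i - 1)) :
    Fin.append (fun i => f (y i)) (fun i => g (y i)) =
      cyc (Fin.append (fun i => f (x i)) (fun i => g (x i))) := by
  rw [cyc_append]
  congr 1 <;> funext i <;> by_cases hi : i = 0 <;> simp [hy, hi, hf, hg]

lemma fst_one_add_u1_mul (x : R1) : ((1 + u1) * x).fst = x.fst := by simp [u1]

lemma snd_one_add_u1_mul (x : R1) : ((1 + u1) * x).snd = x.snd + x.fst := by simp [u1]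

lemma fst_one_add_uu_mul_vv_mul (y : R2) : ((1 + uu * vv) * y).fst = y.fst := by
  simp [uu, vv]

lemma snd_fst_one_add_uu_mul_vv_mul (y : R2) :
    ((1 + uu * vv) * y).snd.fst = y.snd.fst := by
  simp [uu, vv]

lemma snd_snd_one_add_uu_mul_vv_mul (y : R2) :
    ((1 + uu * vv) * y).snd.snd = y.snd.snd + y.fst.fst := by
  simp [uu, vv]

lemma Phi_tau {α β : ℕ} [NeZero α] [NeZero β] (w : V α β) : Phi (tau w) = sigmaW (Phi w) := by
  have h₁ (i : Fin α) : (tau w).1 i = if i = 0 then (1 + u1) * w.1 (i - 1) else w.1 (i - 1) := by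
    simp only [tau]; split_ifs <;> simp
  have h₂ (j : Fin β) :
      (tau w).2 j = if j = 0 then (1 + uu * vv) * w.2 (j - 1) else w.2 (j - 1) := by
    simp only [tau]; split_ifs <;> simp
  simp only [Phi, sigmaW, Prod.mk.injEq]
  refine ⟨cyc_append_comp (fun x : R1 => x.snd) (fun x => x.snd + x.fst) _ ?_ ?_ _ _ h₁,
    cyc_append_comp (fun y : R2 => y.snd.snd) (fun y => y.fst.fst + y.snd.snd) _ ?_ ?_ _ _ h₂,
    cyc_append_comp (fun y : R2 => y.fst.snd + y.snd.snd)
      (fun y => y.fst.fst + y.fst.snd + y.snd.snd) _ ?_ ?_ _ _ h₂,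
    cyc_append_comp (fun y : R2 => y.snd.fst + y.snd.snd)
      (fun y => y.fst.fst + y.snd.fst + y.snd.snd) _ ?_ ?_ _ _ h₂,
    cyc_append_comp (fun y : R2 => y.fst.snd + y.snd.fst + y.snd.snd)
      (fun y => y.fst.fst + y.fst.snd + y.snd.fst + y.snd.snd) _ ?_ ?_ _ _ h₂⟩ <;>
  · intro a
    grind [fst_one_add_u1_mul, snd_one_add_u1_mul, fst_one_add_uu_mul_vv_mul,
      snd_fst_one_add_uu_mul_vv_mul, snd_snd_one_add_uu_mul_vv_mul]

def grayDecode {α β : ℕ} (z : W α β) : V α β :=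
  (fun i => (z.1 (Fin.natAdd α i) - z.1 (Fin.castAdd α i), z.1 (Fin.castAdd α i)),
   fun j => ((z.2.1 (Fin.natAdd β j) - z.2.1 (Fin.castAdd β j),
      z.2.2.1 (Fin.castAdd β j) - z.2.1 (Fin.castAdd β j)),
     (z.2.2.2.1 (Fin.castAdd β j) - z.2.1 (Fin.castAdd β j), z.2.1 (Fin.castAdd β j))))

lemma grayDecode_Phi {α β : ℕ} : Function.LeftInverse grayDecode (Phi (α := α) (β := β)) := by
  intro w
  ext <;> simp only [grayDecode, Phi, Fin.append_left, Fin.append_right, TrivSqZeroExt.fst_mk,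
    TrivSqZeroExt.snd_mk, add_sub_cancel_left, add_sub_cancel_right] <;> rfl

lemma Phi_injective {α β : ℕ} : Function.Injective (Phi (α := α) (β := β)) :=
  grayDecode_Phi.injective

/-- A `Z2[u]Z2[u,v]`-additive code `C` is `(1+u,1+uv)`-additive
constacyclic iff its Gray image is invariant under the block-shift
permutation `σ`. -/
theorem constacyclic_iff_gray_image_shift_invariant (α β : ℕ) [NeZero α] [NeZero β]
    (C : Submodule R2 (V α β)) :
    tau '' (C : Set (V α β)) = (C : Set (V α β)) ↔
      sigmaW '' (Phi '' (C : Set (V α β))) = Phi '' (C : Set (V α β)) := by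
  have h : sigmaW '' (Phi '' (C : Set (V α β))) = Phi '' (tau '' (C : Set (V α β))) := by
    simp only [Set.image_image, Phi_tau]
  rw [h, Set.image_eq_image Phi_injective]
end
end

section
/- Let α, β be positive integers and let j = lcm(α, β). Then for all x, y ∈ R1^α × R2^β, the inner product satisfies ⟨S(x), y⟩ = ⟨x, S^{j−1}(y)⟩, where S is the cyclic shift. -/
open TrivSqZeroExt Finset

set_option synthInstance.maxHeartbeats 1000000
set_option maxHeartbeats 2000000

noncomputable section

/-
The shift `S` acts on each block by a cyclic permutation of the coordinates, so it preserves the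
inner product, and `S^j = id` because `α ∣ j` and `β ∣ j`. Hence
`⟨S x, y⟩ = ⟨S x, S (S^{j-1} y)⟩ = ⟨x, S^{j-1} y⟩`.
-/

open Fin.NatCast in
lemma cyc_iterate_apply {n : ℕ} [NeZero n] {A : Type*} (k : ℕ) (f : Fin n → A) (i : Fin n) :
    cyc^[k] f i = f (i - k) := by
  induction k generalizing i with
  | zero => simp
  | succ k ih => simp [Function.iterate_succ_apply', cyc, ih, sub_sub, add_comm]

open Fin.NatCast in
lemma cyc_iterate_of_dvd {n m : ℕ} [NeZero n] {A : Type*} (h : n ∣ m) :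
    (cyc (n := n) (A := A))^[m] = id :=
  funext fun f => funext fun i => by simp [cyc_iterate_apply, Fin.natCast_eq_zero.mpr h]

lemma sum_cyc {n : ℕ} [NeZero n] {M : Type*} [AddCommMonoid M] (f : Fin n → M) :
    ∑ i, cyc f i = ∑ i, f i :=
  (Equiv.subRight 1).sum_comp f

lemma shiftS_eq_prodMap {α β : ℕ} [NeZero α] [NeZero β] :
    (shiftS : V α β → V α β) = Prod.map cyc cyc :=
  rfl

lemma shiftS_iterate_lcm {α β : ℕ} [NeZero α] [NeZero β] :
    (shiftS : V α β → V α β)^[Nat.lcm α β] = id := by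
  rw [shiftS_eq_prodMap, Prod.map_iterate, cyc_iterate_of_dvd (Nat.dvd_lcm_left α β),
    cyc_iterate_of_dvd (Nat.dvd_lcm_right α β), Prod.map_id]

lemma innerP_shiftS_shiftS {α β : ℕ} [NeZero α] [NeZero β] (x y : V α β) :
    innerP (shiftS x) (shiftS y) = innerP x y := by
  simp only [innerP]
  rw [← sum_cyc fun i => x.1 i * y.1 i, ← sum_cyc fun j => x.2 j * y.2 j]
  rfl

/-- With `j = lcm(α, β)`, the inner product satisfies
`⟨S(x), y⟩ = ⟨x, S^{j−1}(y)⟩` for the cyclic shift `S`. -/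
theorem inner_shift_eq_inner_iterate (α β : ℕ) [NeZero α] [NeZero β]
    (x y : V α β) :
    innerP (shiftS x) y = innerP x (shiftS^[Nat.lcm α β - 1] y) := by
  have hpos : 0 < Nat.lcm α β := Nat.lcm_pos (NeZero.pos α) (NeZero.pos β)
  have hperiod : shiftS (shiftS^[Nat.lcm α β - 1] y) = y := by
    rw [← Function.iterate_succ_apply' shiftS, Nat.succ_eq_add_one, Nat.sub_add_cancel hpos,
      shiftS_iterate_lcm, id]
  rw [← innerP_shiftS_shiftS x, hperiod]

end
end
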